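/- Let u† ∈ L^∞(0,1) be fixed, let c₁ = exp(−‖Gu†‖_∞), and let F be the nonlinear operator [F(u)](x) = exp((Gu)(x)). Then for every ε with 0 < ε < c₁ and every u ∈ L^∞(0,1) with ‖F(u) − F(u†)‖_∞ ≤ c₁ − ε one has ε ‖G(u − u†)‖_∞ ≤ ‖F(u) − F(u†)‖_∞. In particular, the nonlinearity condition c_a ‖u − u†‖_{-1} ≤ ‖F(u) − F(u†)‖ of Assumption 2.1(g) holds with a = 1 and c_a = ε. -/

import Mathlib

/-!
Almost everywhere `|Gu†| ≤ M := ‖Gu†‖_∞`, so `exp (Gu†) ≥ exp (-M) > ε`, and the closeness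
assumption `|exp (Gu) - exp (Gu†)| ≤ exp (-M) - ε` forces `exp (Gu) ≥ ε` as well. Since `exp ≥ ε`
on the whole segment between two points where it is at least `ε`, the mean value theorem gives
`ε |Gu - Gu†| ≤ |exp (Gu) - exp (Gu†)|` almost everywhere, and taking essential suprema concludes.
`‖Gu†‖_∞` is finite because the primitive of a bounded function on `(0,1)` is bounded.
-/

open MeasureTheory ENNReal Set

namespace Real

lemma mul_abs_sub_le_abs_exp_sub_exp {a b ε : ℝ} (ha : ε ≤ exp a) (hb : ε ≤ exp b) :
    ε * |a - b| ≤ |exp a - exp b| := by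
  wlog hab : a ≤ b generalizing a b
  · rw [abs_sub_comm, abs_sub_comm (exp a)]
    exact this hb ha (le_of_not_ge hab)
  have hexp : exp b - exp a = exp a * (exp (b - a) - 1) := by
    rw [mul_sub, ← exp_add, add_sub_cancel, mul_one]
  rw [abs_sub_comm, abs_of_nonneg (sub_nonneg.2 hab), abs_sub_comm,
    abs_of_nonneg (sub_nonneg.2 (exp_le_exp.2 hab)), hexp]
  calc ε * (b - a) ≤ exp a * (b - a) := mul_le_mul_of_nonneg_right ha (sub_nonneg.2 hab)
    _ ≤ exp a * (exp (b - a) - 1) :=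
      mul_le_mul_of_nonneg_left (by linarith [add_one_le_exp (b - a)]) (exp_pos a).le

lemma mul_abs_sub_le_abs_exp_sub_exp_of_abs_le {a b ε M : ℝ} (hεM : ε ≤ exp (-M))
    (hb : |b| ≤ M) (hclose : |exp a - exp b| ≤ exp (-M) - ε) :
    ε * |a - b| ≤ |exp a - exp b| := by
  have hMb : exp (-M) ≤ exp b := exp_le_exp.2 (neg_le_of_abs_le hb)
  have ha : ε ≤ exp a := by linarith [neg_abs_le (exp a - exp b)]
  exact mul_abs_sub_le_abs_exp_sub_exp ha (hεM.trans hMb)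

end Real

section EssSup

variable {α E F : Type*} [MeasurableSpace α] {μ : Measure α}
  [NormedAddCommGroup E] [NormedAddCommGroup F]

lemma ae_norm_le_of_eLpNorm_top_le_ofReal {f : α → E} {c : ℝ} (hc : 0 ≤ c)
    (h : eLpNorm f ⊤ μ ≤ ENNReal.ofReal c) : ∀ᵐ x ∂μ, ‖f x‖ ≤ c := by
  filter_upwards [enorm_ae_le_eLpNormEssSup f μ] with x hx
  rw [← eLpNorm_exponent_top] at hx
  rw [← ofReal_le_ofReal_iff hc, ofReal_norm]
  exact hx.trans h

lemma ae_norm_le_toReal_eLpNorm_top {f : α → E} (hf : eLpNorm f ⊤ μ ≠ ⊤) :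
    ∀ᵐ x ∂μ, ‖f x‖ ≤ (eLpNorm f ⊤ μ).toReal :=
  ae_norm_le_of_eLpNorm_top_le_ofReal toReal_nonneg (ofReal_toReal hf).ge

lemma ofReal_mul_eLpNorm_le_of_ae_mul_norm_le [NormedSpace ℝ E] {f : α → E} {g : α → F}
    {ε : ℝ} (h : ∀ᵐ x ∂μ, ε * ‖f x‖ ≤ ‖g x‖) (p : ℝ≥0∞) :
    ENNReal.ofReal ε * eLpNorm f p μ ≤ eLpNorm g p μ := by
  rcases le_or_gt ε 0 with hε | hε
  · simp [ofReal_of_nonpos hε]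
  rw [← Real.enorm_eq_ofReal hε.le, ← eLpNorm_const_smul]
  refine eLpNorm_mono_ae (h.mono fun x hx => ?_)
  rwa [Pi.smul_apply, norm_smul, Real.norm_of_nonneg hε.le]

end EssSup

lemma eLpNorm_top_primitive_le {E : Type*} [NormedAddCommGroup E] [NormedSpace ℝ E]
    {f : ℝ → E} {a b : ℝ} (hf : eLpNorm f ⊤ (volume.restrict (Ioo a b)) ≠ ⊤) :
    eLpNorm (fun x => ∫ t in a..x, f t) ⊤ (volume.restrict (Ioo a b)) ≤
      eLpNorm f ⊤ (volume.restrict (Ioo a b)) * ENNReal.ofReal (b - a) := by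
  set C := (eLpNorm f ⊤ (volume.restrict (Ioo a b))).toReal
  have hf_ae : ∀ᵐ t, t ∈ Ioo a b → ‖f t‖ ≤ C :=
    (ae_restrict_iff' measurableSet_Ioo).mp (ae_norm_le_toReal_eLpNorm_top hf)
  have hbound : ∀ x ∈ Ioo a b, ‖∫ t in a..x, f t‖ ≤ C * (b - a) := by
    intro x hx
    calc ‖∫ t in a..x, f t‖ ≤ C * |x - a| := by
          refine intervalIntegral.norm_integral_le_of_norm_le_const_ae ?_
          filter_upwards [hf_ae] with t ht hmem
          rw [uIoc_of_le hx.1.le] at hmem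
          exact ht ⟨hmem.1, hmem.2.trans_lt hx.2⟩
      _ ≤ C * (b - a) := by
          rw [abs_of_pos (sub_pos.2 hx.1)]
          gcongr
          exact hx.2.le
  rw [← ofReal_toReal hf, ← ofReal_mul toReal_nonneg, eLpNorm_exponent_top]
  exact eLpNormEssSup_le_of_ae_bound
    ((ae_restrict_iff' measurableSet_Ioo).mpr (.of_forall hbound))

theorem exponential_forward_operator_nonlinearity_lower_general
    (udag : ℝ → ℝ) (hudag : MemLp udag ⊤ (volume.restrict (Set.Ioo 0 1)))
    (ε : ℝ)
    (hεc : ε < Real.exp (-(eLpNorm (fun x => ∫ t in (0:ℝ)..x, udag t) ⊤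
      (volume.restrict (Set.Ioo 0 1))).toReal))
    (u : ℝ → ℝ)
    (hclose : eLpNorm (fun x => Real.exp (∫ t in (0:ℝ)..x, u t) -
        Real.exp (∫ t in (0:ℝ)..x, udag t)) ⊤ (volume.restrict (Set.Ioo 0 1)) ≤
      ENNReal.ofReal (Real.exp (-(eLpNorm (fun x => ∫ t in (0:ℝ)..x, udag t) ⊤
        (volume.restrict (Set.Ioo 0 1))).toReal) - ε)) :
    ENNReal.ofReal ε *
        eLpNorm (fun x => (∫ t in (0:ℝ)..x, u t) - ∫ t in (0:ℝ)..x, udag t) ⊤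
          (volume.restrict (Set.Ioo 0 1)) ≤
      eLpNorm (fun x => Real.exp (∫ t in (0:ℝ)..x, u t) -
        Real.exp (∫ t in (0:ℝ)..x, udag t)) ⊤ (volume.restrict (Set.Ioo 0 1)) := by
  have hGudag_fin : eLpNorm (fun x => ∫ t in (0:ℝ)..x, udag t) ⊤
      (volume.restrict (Ioo 0 1)) ≠ ⊤ :=
    ne_top_of_le_ne_top (mul_ne_top hudag.eLpNorm_ne_top ofReal_ne_top)
      (eLpNorm_top_primitive_le hudag.eLpNorm_ne_top)
  have hGudag := ae_norm_le_toReal_eLpNorm_top hGudag_fin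
  have hFclose := ae_norm_le_of_eLpNorm_top_le_ofReal (sub_nonneg.2 hεc.le) hclose
  refine ofReal_mul_eLpNorm_le_of_ae_mul_norm_le ?_ ⊤
  filter_upwards [hGudag, hFclose] with x hb hcl
  exact Real.mul_abs_sub_le_abs_exp_sub_exp_of_abs_le hεc.le hb hcl

/-- Nonlinearity condition (2.1(g), second part, with `a = 1`) for the exponential forward
operator `[F(u)](x) = exp((Gu)(x))` on `L^∞(0,1)`: with `c₁ = exp(−‖Gu†‖_∞)`, for every
`0 < ε < c₁` and every `u` with `‖F(u) − F(u†)‖_∞ ≤ c₁ − ε`, one has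
`ε ‖G(u − u†)‖_∞ ≤ ‖F(u) − F(u†)‖_∞`. -/
theorem exponential_forward_operator_nonlinearity_lower
    (udag : ℝ → ℝ) (hudag : MemLp udag ⊤ (volume.restrict (Set.Ioo 0 1)))
    (ε : ℝ) (hε : 0 < ε)
    (hεc : ε < Real.exp (-(eLpNorm (fun x => ∫ t in (0:ℝ)..x, udag t) ⊤
      (volume.restrict (Set.Ioo 0 1))).toReal))
    (u : ℝ → ℝ) (hu : MemLp u ⊤ (volume.restrict (Set.Ioo 0 1)))
    (hclose : eLpNorm (fun x => Real.exp (∫ t in (0:ℝ)..x, u t) -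
        Real.exp (∫ t in (0:ℝ)..x, udag t)) ⊤ (volume.restrict (Set.Ioo 0 1)) ≤
      ENNReal.ofReal (Real.exp (-(eLpNorm (fun x => ∫ t in (0:ℝ)..x, udag t) ⊤
        (volume.restrict (Set.Ioo 0 1))).toReal) - ε)) :
    ENNReal.ofReal ε *
        eLpNorm (fun x => (∫ t in (0:ℝ)..x, u t) - ∫ t in (0:ℝ)..x, udag t) ⊤
          (volume.restrict (Set.Ioo 0 1)) ≤
      eLpNorm (fun x => Real.exp (∫ t in (0:ℝ)..x, u t) -
        Real.exp (∫ t in (0:ℝ)..x, udag t)) ⊤ (volume.restrict (Set.Ioo 0 1)) :=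
  exponential_forward_operator_nonlinearity_lower_general udag hudag ε hεc u hclose
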